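/- Let V, W be subspaces of ℝⁿ with V ∩ W = {0}, and X, Y positive semidefinite matrices with range V and W respectively. Let T = (O_V, O_W) be the matrix formed by concatenating orthonormal bases of V and W. Then det_V(X)·det_W(Y) = det_{V+W}((T⁺)ᵀT⁺)·det_{V+W}(X+Y), where T⁺ is the Moore–Penrose pseudoinverse and det_U(M) = det(O_Uᵀ M O_U) for O_U an orthonormal basis of U. -/

import Mathlib

/-!
Since `V ∩ W = 0` and `O_V`, `O_W` have orthonormal columns, `T = (O_V, O_W)` is injective,
so its Gram matrix `G = TᵀT` is invertible and `T⁺ = G⁻¹Tᵀ`. Both `T⁺ᵀT⁺ = T (G⁻¹G⁻¹) Tᵀ`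
and `X + Y = T diag(O_VᵀXO_V, O_WᵀYO_W) Tᵀ` have the form `T M Tᵀ`, and compressing such a
matrix to `U ⊇ ran T` gives `det_U (T M Tᵀ) = det G · det M`. Hence the right-hand side is
`(det G)⁻¹ · det G · det_V X · det_W Y`.
-/

open Matrix

/-- `Tp` is the Moore–Penrose pseudoinverse of the (rectangular) matrix `T`. -/
def IsMoorePenrose {α β : Type*} [Fintype α] [Fintype β]
    (T : Matrix α β ℝ) (Tp : Matrix β α ℝ) : Prop :=
  T * Tp * T = T ∧ Tp * T * Tp = Tp ∧ (T * Tp)ᵀ = T * Tp ∧ (Tp * T)ᵀ = Tp * T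

open LinearMap (range)

namespace Matrix

variable {R : Type*} [CommRing R] {m ι κ : Type*}

lemma mulVec_injective_of_mul_eq_one [Fintype m] [Fintype ι] [DecidableEq ι]
    {A : Matrix m ι R} {B : Matrix ι m R} (h : B * A = 1) :
    Function.Injective A.mulVec := fun v w hvw => by
  simpa [mulVec_mulVec, h] using congrArg (B *ᵥ ·) hvw

lemma mul_transpose_mul_of_range_le [Fintype m] [Fintype ι] [Fintype κ] [DecidableEq ι]
    [DecidableEq κ] {O : Matrix m κ R} (hO : Oᵀ * O = 1)
    {B : Matrix m ι R} (h : range B.mulVecLin ≤ range O.mulVecLin) : O * (Oᵀ * B) = B := by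
  refine ext_of_mulVec_single fun j => ?_
  obtain ⟨c, hc⟩ := h ⟨Pi.single j 1, rfl⟩
  simp only [mulVecLin_apply] at hc
  rw [← mulVec_mulVec, ← mulVec_mulVec, ← hc]
  congr 1
  rw [mulVec_mulVec, hO, one_mulVec]

lemma mul_mul_transpose_of_range_le [Fintype m] [Fintype κ] [DecidableEq m] [DecidableEq κ]
    {O : Matrix m κ R} (hO : Oᵀ * O = 1) {X : Matrix m m R} (hX : X.IsSymm)
    (h : range X.mulVecLin ≤ range O.mulVecLin) :
    O * (Oᵀ * X * O) * Oᵀ = X := by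
  have hleft : O * (Oᵀ * X) = X := mul_transpose_mul_of_range_le hO h
  have hright : X * O * Oᵀ = X := by
    simpa [transpose_mul, hX.eq, Matrix.mul_assoc] using congrArg transpose hleft
  calc O * (Oᵀ * X * O) * Oᵀ = O * (Oᵀ * (X * O * Oᵀ)) := by simp only [Matrix.mul_assoc]
    _ = X := by rw [hright, hleft]

lemma range_fromCols_mulVecLin [Fintype ι] [Fintype κ] (A : Matrix m ι R) (B : Matrix m κ R) :
    range (fromCols A B).mulVecLin = range A.mulVecLin ⊔ range B.mulVecLin := by
  apply le_antisymm
  · rintro _ ⟨v, rfl⟩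
    rw [mulVecLin_apply, fromCols_mulVec]
    exact Submodule.add_mem_sup ⟨_, rfl⟩ ⟨_, rfl⟩
  · refine sup_le ?_ ?_
    · rintro _ ⟨v, rfl⟩
      exact ⟨Sum.elim v 0, by simp⟩
    · rintro _ ⟨v, rfl⟩
      exact ⟨Sum.elim 0 v, by simp⟩

lemma fromCols_mulVec_injective [Fintype ι] [Fintype κ] {A : Matrix m ι R} {B : Matrix m κ R}
    (hA : Function.Injective A.mulVec) (hB : Function.Injective B.mulVec)
    (hAB : Disjoint (range A.mulVecLin) (range B.mulVecLin)) :
    Function.Injective (fromCols A B).mulVec := by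
  change Function.Injective (fromCols A B).mulVecLin
  rw [← LinearMap.ker_eq_bot, LinearMap.ker_eq_bot']
  intro v hv
  have hsum : A *ᵥ (v ∘ Sum.inl) + B *ᵥ (v ∘ Sum.inr) = 0 := by simpa using hv
  have hAv : A *ᵥ (v ∘ Sum.inl) = 0 := by
    refine Submodule.disjoint_def.mp hAB _ ⟨_, rfl⟩ ⟨-(v ∘ Sum.inr), ?_⟩
    rw [mulVecLin_apply, mulVec_neg, neg_eq_of_add_eq_zero_left hsum]
  have hBv : B *ᵥ (v ∘ Sum.inr) = 0 := by rwa [hAv, zero_add] at hsum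
  have hl : v ∘ Sum.inl = 0 := hA (by rw [hAv, mulVec_zero])
  have hr : v ∘ Sum.inr = 0 := hB (by rw [hBv, mulVec_zero])
  ext (i | i)
  · exact congrFun hl i
  · exact congrFun hr i

lemma fromCols_mul_fromBlocks_mul_transpose [Fintype ι] [Fintype κ]
    (A : Matrix m ι R) (B : Matrix m κ R) (P : Matrix ι ι R) (Q : Matrix κ κ R) :
    fromCols A B * fromBlocks P 0 0 Q * (fromCols A B)ᵀ = A * P * Aᵀ + B * Q * Bᵀ := by
  rw [fromCols_mul_fromBlocks, transpose_fromCols, fromCols_mul_fromRows]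
  simp only [Matrix.mul_zero, add_zero, zero_add]

lemma det_transpose_mul_mul_transpose_mul_of_range_le [Fintype m] [Fintype ι] [DecidableEq ι]
    {O T : Matrix m ι R} (hO : Oᵀ * O = 1) (hT : range T.mulVecLin ≤ range O.mulVecLin)
    (M : Matrix ι ι R) :
    (Oᵀ * (T * M * Tᵀ) * O).det = (Tᵀ * T).det * M.det := by
  set A := Oᵀ * T
  have hOA : O * A = T := mul_transpose_mul_of_range_le hO hT
  have hcompress : Oᵀ * (T * M * Tᵀ) * O = A * M * Aᵀ := by
    simp only [A, transpose_mul, transpose_transpose, Matrix.mul_assoc]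
  have hgram : Tᵀ * T = Aᵀ * A := by
    rw [← hOA, transpose_mul, Matrix.mul_assoc, ← Matrix.mul_assoc Oᵀ, hO, Matrix.one_mul]
  rw [hcompress, hgram, det_mul, det_mul, det_mul, det_transpose]
  ring

end Matrix

section MoorePenrose

variable {α β : Type*} [Fintype α] [Fintype β] [DecidableEq β] {T : Matrix α β ℝ}
  {Tp : Matrix β α ℝ}

lemma IsMoorePenrose.eq_inv_mul_transpose (h : IsMoorePenrose T Tp) (hT : IsUnit (Tᵀ * T)) :
    Tp = (Tᵀ * T)⁻¹ * Tᵀ := by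
  obtain ⟨h1, -, h3, -⟩ := h
  have hgram : Tᵀ * T * Tp = Tᵀ := by
    rw [Matrix.mul_assoc, ← h3, ← transpose_mul, h1]
  calc Tp = (Tᵀ * T)⁻¹ * (Tᵀ * T) * Tp := by
        rw [nonsing_inv_mul _ ((isUnit_iff_isUnit_det _).mp hT), Matrix.one_mul]
    _ = (Tᵀ * T)⁻¹ * Tᵀ := by rw [Matrix.mul_assoc, hgram]

lemma IsMoorePenrose.transpose_mul_self (h : IsMoorePenrose T Tp) (hT : IsUnit (Tᵀ * T)) :
    Tpᵀ * Tp = T * ((Tᵀ * T)⁻¹ * (Tᵀ * T)⁻¹) * Tᵀ := by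
  rw [h.eq_inv_mul_transpose hT, transpose_mul, transpose_nonsing_inv, transpose_mul,
    transpose_transpose]
  simp only [Matrix.mul_assoc]

end MoorePenrose

/-- Let `V, W ⊆ ℝⁿ` with `V ∩ W = {0}`, `X, Y ⪰ 0` with ranges `V, W`, and
`T = (O_V, O_W)` the concatenation of orthonormal bases of `V` and `W`.  Then
`det_V(X)·det_W(Y) = det_{V+W}((T⁺)ᵀT⁺)·det_{V+W}(X+Y)`, where `O_U` is an orthonormal
basis matrix of `U = V + W`. -/
theorem stmt14 {n d1 d2 : ℕ}
    (OV : Matrix (Fin n) (Fin d1) ℝ) (OW : Matrix (Fin n) (Fin d2) ℝ)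
    (hOV : OVᵀ * OV = 1) (hOW : OWᵀ * OW = 1)
    (hindep : LinearMap.range OV.mulVecLin ⊓ LinearMap.range OW.mulVecLin = ⊥)
    (X Y : Matrix (Fin n) (Fin n) ℝ) (hX : X.PosSemidef) (hY : Y.PosSemidef)
    (hVX : LinearMap.range X.mulVecLin = LinearMap.range OV.mulVecLin)
    (hWY : LinearMap.range Y.mulVecLin = LinearMap.range OW.mulVecLin)
    (OU : Matrix (Fin n) (Fin d1 ⊕ Fin d2) ℝ) (hOU : OUᵀ * OU = 1)
    (hU : LinearMap.range OU.mulVecLin =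
      LinearMap.range OV.mulVecLin ⊔ LinearMap.range OW.mulVecLin)
    (Tp : Matrix (Fin d1 ⊕ Fin d2) (Fin n) ℝ)
    (hTp : IsMoorePenrose (Matrix.fromCols OV OW) Tp) :
    (OVᵀ * X * OV).det * (OWᵀ * Y * OW).det =
      (OUᵀ * (Tpᵀ * Tp) * OU).det * (OUᵀ * (X + Y) * OU).det := by
  set T := fromCols OV OW
  have hT : Function.Injective T.mulVec :=
    fromCols_mulVec_injective (mulVec_injective_of_mul_eq_one hOV)
      (mulVec_injective_of_mul_eq_one hOW) (disjoint_iff.mpr hindep)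
  have hgram : IsUnit (Tᵀ * T) := by
    simpa using (PosDef.conjTranspose_mul_self T hT).isUnit
  have hgram_det : (Tᵀ * T).det ≠ 0 := ((isUnit_iff_isUnit_det _).mp hgram).ne_zero
  have hTU : range T.mulVecLin ≤ range OU.mulVecLin :=
    (range_fromCols_mulVecLin OV OW).trans_le hU.ge
  have hXY : X + Y = T * fromBlocks (OVᵀ * X * OV) 0 0 (OWᵀ * Y * OW) * Tᵀ := by
    rw [fromCols_mul_fromBlocks_mul_transpose,
      mul_mul_transpose_of_range_le hOV (isHermitian_iff_isSymm.mp hX.1) hVX.le,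
      mul_mul_transpose_of_range_le hOW (isHermitian_iff_isSymm.mp hY.1) hWY.le]
  rw [hTp.transpose_mul_self hgram, hXY,
    det_transpose_mul_mul_transpose_mul_of_range_le hOU hTU,
    det_transpose_mul_mul_transpose_mul_of_range_le hOU hTU,
    det_fromBlocks_zero₂₁, det_mul, det_nonsing_inv, Ring.inverse_eq_inv]
  field_simp
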